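/- arXiv:1304.5790 — 3 statements merged into one kernel-verified Lean document; each statement's English description precedes it below -/
import Mathlib

section
/- Let b_{11}, b_{12}, b_{21}, b_{22} be nonnegative reals with b_{11} + b_{22} > b_{12} + b_{21}, and for x > 1 let H(x) be the real 2×2 matrix with entries H(x)_{ij} = x^{b_{ij}/2}. Then lim_{x→∞} log det(I_2 + H(x) H(x)^T) / log x = b_{11} + b_{22}. -/
/-!
With `s = b₁₁ + b₂₂` and `t = b₁₂ + b₂₁`, the 2×2 Cauchy–Binet identity gives
`det (I + H Hᵀ) = 1 + ∑ x^{b_ij} + (det H)²` with `det H = x^{s/2} - x^{t/2}`.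
Every `b_ij ≤ s` and `t < s`, so the determinant lies between `x^s / 4` and `6 x^s` for large `x`,
and its logarithm is `s log x + O(1)`.
-/

open Filter Topology Real Matrix

theorem Matrix.det_one_add_mul_transpose_fin_two {R : Type*} [CommRing R]
    (A : Matrix (Fin 2) (Fin 2) R) :
    (1 + A * Aᵀ).det = 1 + (A 0 0 ^ 2 + A 0 1 ^ 2 + A 1 0 ^ 2 + A 1 1 ^ 2) + A.det ^ 2 := by
  simp only [det_fin_two, add_apply, one_apply_eq, mul_apply, transpose_apply, Fin.sum_univ_two,
    one_apply_ne zero_ne_one, one_apply_ne one_ne_zero, zero_add]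
  ring

theorem tendsto_log_mul_rpow_div_log {c : ℝ} (hc : 0 < c) (s : ℝ) :
    Tendsto (fun x => log (c * x ^ s) / log x) atTop (𝓝 s) := by
  have h : Tendsto (fun x => s + log c * (log x)⁻¹) atTop (𝓝 (s + log c * 0)) :=
    tendsto_const_nhds.add (tendsto_log_atTop.inv_tendsto_atTop.const_mul (log c))
  rw [mul_zero, add_zero] at h
  refine h.congr' ?_
  filter_upwards [eventually_gt_atTop 1] with x hx
  have hlog : log x ≠ 0 := (log_pos hx).ne'
  rw [log_mul hc.ne' (rpow_pos_of_pos (by linarith) s).ne', log_rpow (by linarith)]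
  field_simp
  ring

theorem tendsto_log_div_log_of_le_of_le {f : ℝ → ℝ} {s c C : ℝ} (hc : 0 < c) (hC : 0 < C)
    (hlo : ∀ᶠ x in atTop, c * x ^ s ≤ f x) (hhi : ∀ᶠ x in atTop, f x ≤ C * x ^ s) :
    Tendsto (fun x => log (f x) / log x) atTop (𝓝 s) := by
  refine tendsto_of_tendsto_of_tendsto_of_le_of_le' (tendsto_log_mul_rpow_div_log hc s)
    (tendsto_log_mul_rpow_div_log hC s) ?_ ?_
  · filter_upwards [hlo, eventually_gt_atTop 1] with x hx hx1
    have : 0 < c * x ^ s := mul_pos hc (rpow_pos_of_pos (by linarith) s)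
    exact div_le_div_of_nonneg_right (log_le_log this hx) (log_nonneg hx1.le)
  · filter_upwards [hlo, hhi, eventually_gt_atTop 1] with x hxlo hx hx1
    have : 0 < f x := (mul_pos hc (rpow_pos_of_pos (by linarith) s)).trans_le hxlo
    exact div_le_div_of_nonneg_right (log_le_log this hx) (log_nonneg hx1.le)

theorem eventually_rpow_le_half_rpow {t s : ℝ} (hts : t < s) :
    ∀ᶠ x : ℝ in atTop, x ^ t ≤ x ^ s / 2 := by
  have hsmall := (tendsto_rpow_neg_atTop (sub_pos.2 hts)).eventually_le_const
    (by norm_num : (0 : ℝ) < 1 / 2)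
  filter_upwards [hsmall, eventually_gt_atTop 0] with x hx hx0
  calc x ^ t = x ^ s * x ^ (-(s - t)) := by rw [← rpow_add hx0]; ring_nf
    _ ≤ x ^ s * (1 / 2) := by gcongr
    _ = x ^ s / 2 := by ring

theorem rpow_half_sq {x : ℝ} (hx : 0 ≤ x) (a : ℝ) : (x ^ (a / 2)) ^ 2 = x ^ a := by
  rw [← rpow_mul_natCast hx]
  norm_num

section RpowHalfMatrix

variable (b11 b12 b21 b22 : ℝ)

noncomputable def rpowHalfMatrix (x : ℝ) : Matrix (Fin 2) (Fin 2) ℝ :=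
  !![x ^ (b11 / 2), x ^ (b12 / 2); x ^ (b21 / 2), x ^ (b22 / 2)]

variable {b11 b12 b21 b22}

theorem det_one_add_rpowHalfMatrix {x : ℝ} (hx : 0 < x) :
    (1 + rpowHalfMatrix b11 b12 b21 b22 x * (rpowHalfMatrix b11 b12 b21 b22 x)ᵀ).det =
      1 + (x ^ b11 + x ^ b12 + x ^ b21 + x ^ b22) +
        (x ^ ((b11 + b22) / 2) - x ^ ((b12 + b21) / 2)) ^ 2 := by
  rw [det_one_add_mul_transpose_fin_two, det_fin_two]
  simp only [rpowHalfMatrix, of_apply, cons_val', cons_val_zero,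
    cons_val_one, rpow_half_sq hx.le, add_div, rpow_add hx]

theorem eventually_le_det_one_add_rpowHalfMatrix (hmax : b12 + b21 < b11 + b22) :
    ∀ᶠ x in atTop, 1 / 4 * x ^ (b11 + b22) ≤
      (1 + rpowHalfMatrix b11 b12 b21 b22 x * (rpowHalfMatrix b11 b12 b21 b22 x)ᵀ).det := by
  filter_upwards [eventually_rpow_le_half_rpow (div_lt_div_of_pos_right hmax two_pos),
    eventually_gt_atTop 0] with x hsmall hx
  rw [det_one_add_rpowHalfMatrix hx]
  have hdet : x ^ ((b11 + b22) / 2) / 2 ≤ x ^ ((b11 + b22) / 2) - x ^ ((b12 + b21) / 2) := by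
    linarith
  have hsq := pow_le_pow_left₀ (by positivity) hdet 2
  rw [div_pow, rpow_half_sq hx.le] at hsq
  have : 0 ≤ 1 + (x ^ b11 + x ^ b12 + x ^ b21 + x ^ b22) := by positivity
  linarith

theorem det_one_add_rpowHalfMatrix_le (h11 : 0 ≤ b11) (h12 : 0 ≤ b12) (h21 : 0 ≤ b21)
    (h22 : 0 ≤ b22) (hmax : b12 + b21 < b11 + b22) {x : ℝ} (hx : 1 ≤ x) :
    (1 + rpowHalfMatrix b11 b12 b21 b22 x * (rpowHalfMatrix b11 b12 b21 b22 x)ᵀ).det ≤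
      6 * x ^ (b11 + b22) := by
  rw [det_one_add_rpowHalfMatrix (by linarith)]
  have hmono : ∀ b ≤ b11 + b22, x ^ b ≤ x ^ (b11 + b22) := fun b hb =>
    rpow_le_rpow_of_exponent_le hx hb
  have hhalf : x ^ ((b12 + b21) / 2) ≤ x ^ ((b11 + b22) / 2) :=
    rpow_le_rpow_of_exponent_le hx (by linarith)
  have hdet : (x ^ ((b11 + b22) / 2) - x ^ ((b12 + b21) / 2)) ^ 2 ≤ x ^ (b11 + b22) := by
    rw [← rpow_half_sq (by linarith : 0 ≤ x) (b11 + b22)]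
    exact pow_le_pow_left₀ (sub_nonneg.2 hhalf) (sub_le_self _ (by positivity)) 2
  have hone : 1 ≤ x ^ (b11 + b22) := one_le_rpow hx (by linarith)
  linarith [hmono b11 (by linarith), hmono b12 (by linarith), hmono b21 (by linarith),
    hmono b22 (by linarith)]

end RpowHalfMatrix

open Matrix in
theorem stmt_5 (b11 b12 b21 b22 : ℝ)
    (h11 : 0 ≤ b11) (h12 : 0 ≤ b12) (h21 : 0 ≤ b21) (h22 : 0 ≤ b22)
    (hmax : b12 + b21 < b11 + b22) :
    Filter.Tendsto
      (fun x : ℝ =>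
        Real.log
          ((1 +
            (!![x ^ (b11 / 2), x ^ (b12 / 2); x ^ (b21 / 2), x ^ (b22 / 2)] :
              Matrix (Fin 2) (Fin 2) ℝ) *
            (!![x ^ (b11 / 2), x ^ (b12 / 2); x ^ (b21 / 2), x ^ (b22 / 2)] :
              Matrix (Fin 2) (Fin 2) ℝ)ᵀ).det) / Real.log x)
      Filter.atTop (nhds (b11 + b22)) :=
  tendsto_log_div_log_of_le_of_le (by norm_num) (by norm_num)
    (eventually_le_det_one_add_rpowHalfMatrix hmax)
    ((eventually_ge_atTop 1).mono fun _ hx => det_one_add_rpowHalfMatrix_le h11 h12 h21 h22 hmax hx)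
end

section
/- Let α_{s1}, α_{s2}, α_{1d}, α_{2d}, β_1, β_2 be nonnegative reals with α_{s1} ≥ α_{s2} and α_{1d} ≥ α_{2d}. Then min{ max{1, α_{s1}, α_{s2}}, max{α_{s2} + α_{1d}, β_2 + 1}, max{α_{s1} + α_{2d}, β_1 + 1}, max{1, α_{1d}, α_{2d}} } = max{1, min{α_{s1}, α_{1d}}, min{α_{s2}, α_{2d}}}. -/
theorem stmt_8 (αs1 αs2 α1d α2d β1 β2 : ℝ)
    (h1 : 0 ≤ αs1) (h2 : 0 ≤ αs2) (h3 : 0 ≤ α1d) (h4 : 0 ≤ α2d)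
    (h5 : 0 ≤ β1) (h6 : 0 ≤ β2)
    (hs : αs2 ≤ αs1) (hd : α2d ≤ α1d) :
    min (max 1 (max αs1 αs2))
        (min (max (αs2 + α1d) (β2 + 1))
          (min (max (αs1 + α2d) (β1 + 1)) (max 1 (max α1d α2d)))) =
      max 1 (max (min αs1 α1d) (min αs2 α2d)) := by
  have m1a : min αs1 α1d ≤ αs1 := min_le_left _ _
  have m1b : min αs1 α1d ≤ α1d := min_le_right _ _
  have m2a : min αs2 α2d ≤ αs2 := min_le_left _ _
  have m2b : min αs2 α2d ≤ α2d := min_le_right _ _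
  have hR1 : (1:ℝ) ≤ max 1 (max (min αs1 α1d) (min αs2 α2d)) := le_max_left _ _
  have hRm : min αs1 α1d ≤ max 1 (max (min αs1 α1d) (min αs2 α2d)) :=
    le_trans (le_max_left _ _) (le_max_right _ _)
  apply le_antisymm
  · rcases le_total αs1 α1d with h | h
    · have e : min αs1 α1d = αs1 := min_eq_left h
      refine le_trans (min_le_left _ _) (max_le hR1 (max_le ?_ ?_)) <;> linarith
    · have e : min αs1 α1d = α1d := min_eq_right h
      refine le_trans (le_trans (min_le_right _ _) (le_trans (min_le_right _ _)
        (min_le_right _ _))) (max_le hR1 (max_le ?_ ?_)) <;> linarith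
  · refine le_min (max_le ?_ (max_le ?_ ?_)) (le_min (max_le ?_ (max_le ?_ ?_))
      (le_min (max_le ?_ (max_le ?_ ?_)) (max_le ?_ (max_le ?_ ?_))))
    · exact le_max_left _ _
    · exact le_trans (m1a.trans (le_max_left _ _)) (le_max_right _ _)
    · exact le_trans ((m2a.trans hs).trans (le_max_left _ _)) (le_max_right _ _)
    · linarith [le_max_right (αs2 + α1d) (β2 + 1)]
    · linarith [le_max_left (αs2 + α1d) (β2 + 1)]
    · linarith [le_max_left (αs2 + α1d) (β2 + 1)]
    · linarith [le_max_right (αs1 + α2d) (β1 + 1)]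
    · linarith [le_max_left (αs1 + α2d) (β1 + 1)]
    · linarith [le_max_left (αs1 + α2d) (β1 + 1)]
    · exact le_max_left _ _
    · exact le_trans (m1b.trans (le_max_left _ _)) (le_max_right _ _)
    · exact le_trans (m2b.trans (le_max_right _ _)) (le_max_right _ _)
end

section
/- Let α_{s1}, α_{s2}, α_{1d}, α_{2d}, β_1, β_2 be nonnegative reals satisfying max{α_{s2}, α_{1d}} < min{α_{s1}, α_{2d}}. Then min{ max{1, α_{s1}, α_{s2}}, max{α_{s2} + α_{1d}, β_2 + 1}, max{α_{s1} + α_{2d}, β_1 + 1}, max{1, α_{1d}, α_{2d}} } = min{ max{α_{s2} + α_{1d}, β_2 + 1}, max{1, min{α_{s1}, α_{2d}}} }. -/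
theorem stmt_10 (αs1 αs2 α1d α2d β1 β2 : ℝ)
    (h1 : 0 ≤ αs1) (h2 : 0 ≤ αs2) (h3 : 0 ≤ α1d) (h4 : 0 ≤ α2d)
    (h5 : 0 ≤ β1) (h6 : 0 ≤ β2)
    (hcond : max αs2 α1d < min αs1 α2d) :
    min (max 1 (max αs1 αs2))
        (min (max (αs2 + α1d) (β2 + 1))
          (min (max (αs1 + α2d) (β1 + 1)) (max 1 (max α1d α2d)))) =
      min (max (αs2 + α1d) (β2 + 1)) (max 1 (min αs1 α2d)) := by
  have h7 : αs2 ≤ αs1 :=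
    ((le_max_left αs2 α1d).trans_lt (hcond.trans_le (min_le_left _ _))).le
  have h8 : α1d ≤ α2d :=
    ((le_max_right αs2 α1d).trans_lt (hcond.trans_le (min_le_right _ _))).le
  have hC : min (max 1 αs1) (max 1 α2d) ≤ max (αs1 + α2d) (β1 + 1) := by
    refine (min_le_left _ _).trans (max_le ?_ ?_)
    · linarith [le_max_right (αs1 + α2d) (β1 + 1)]
    · linarith [le_max_left (αs1 + α2d) (β1 + 1)]
  rw [max_eq_left h7, max_eq_right h8, max_min_distrib_left, min_left_comm,
    min_left_comm (max 1 αs1) (max (αs1 + α2d) (β1 + 1)), min_eq_right hC]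
end
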